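/- arXiv:1205.2342 — 2 statements merged into one kernel-verified Lean document; each statement's English description precedes it below -/
import Mathlib

section
/- Let Δ be a pure chamber complex of rank n with a type function, and suppose that the link of every vertex is a thick chamber complex of rank n−1. If the geometric realization of Δ (with the weak topology) is connected, then Δ is gallery-connected, i.e. any two chambers of Δ can be joined by a gallery. -/
/-! Basic combinatorial infrastructure: abstract simplicial complexes, chamber
complexes, galleries, typed complexes and geometries of type `M` in the sense of Tits. -/

/-- An abstract simplicial complex on the vertex set `V`, given by its set of
(finite) faces, closed under passing to subsets. -/
structure SComplex (V : Type*) [DecidableEq V] where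
  faces : Set (Finset V)
  down_closed : ∀ ⦃s t : Finset V⦄, s ∈ faces → t ⊆ s → t ∈ faces

namespace SComplex

variable {V : Type*} [DecidableEq V] (K : SComplex V)

/-- A chamber is a maximal face. -/
def IsChamber (c : Finset V) : Prop :=
  c ∈ K.faces ∧ ∀ s ∈ K.faces, c ⊆ s → s = c

/-- A complex is pure of rank `n` if every face is contained in a chamber and every
chamber has `n` vertices. -/
def Pure (n : ℕ) : Prop :=
  (∀ s ∈ K.faces, ∃ c, K.IsChamber c ∧ s ⊆ c) ∧ ∀ c, K.IsChamber c → c.card = n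

/-- Two chambers are adjacent (in a complex of rank `n`) if they share a face of
corank at most 1. -/
def Adj (n : ℕ) (c d : Finset V) : Prop :=
  K.IsChamber c ∧ K.IsChamber d ∧ n ≤ (c ∩ d).card + 1

/-- A pure rank-`n` complex is gallery-connected if any two chambers are joined by a
gallery, i.e. by a chain of consecutively adjacent chambers. -/
def GalleryConnected (n : ℕ) : Prop :=
  ∀ c d, K.IsChamber c → K.IsChamber d → Relation.ReflTransGen (K.Adj n) c d

/-- A chamber complex of rank `n`: pure of rank `n` and gallery-connected. -/
def IsChamberComplex (n : ℕ) : Prop :=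
  K.Pure n ∧ K.GalleryConnected n

/-- Thickness: every corank-1 face lies in at least three chambers. -/
def Thick (n : ℕ) : Prop :=
  ∀ s ∈ K.faces, s.card + 1 = n →
    ∃ c₁ c₂ c₃ : Finset V, K.IsChamber c₁ ∧ K.IsChamber c₂ ∧ K.IsChamber c₃ ∧
      s ⊆ c₁ ∧ s ⊆ c₂ ∧ s ⊆ c₃ ∧ c₁ ≠ c₂ ∧ c₁ ≠ c₃ ∧ c₂ ≠ c₃

/-- The link of a simplex `α`. -/
def link (α : Finset V) : SComplex V where
  faces := {s | Disjoint α s ∧ α ∪ s ∈ K.faces}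
  down_closed := by
    intro s t hs hts
    exact ⟨hs.1.mono_right (Finset.coe_subset.2 hts |>.trans le_rfl),
      K.down_closed hs.2 (Finset.union_subset_union le_rfl hts)⟩

/-- The graph on the vertices of a complex, two vertices being adjacent when they are
joined by an edge of the complex. -/
def vertexGraph : SimpleGraph {v : V // {v} ∈ K.faces} where
  Adj u w := u ≠ w ∧ {u.1, w.1} ∈ K.faces
  symm := by
    constructor
    intro u w h
    exact ⟨h.1.symm, by rw [Finset.pair_comm]; exact h.2⟩
  loopless := ⟨fun u h => h.1 rfl⟩

/-- A generalized `n`-gon: a thick chamber complex of rank 2 whose vertex graph has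
girth `2n` and diameter `n`. -/
def IsGenNGon (n : ℕ) : Prop :=
  K.IsChamberComplex 2 ∧ K.Thick 2 ∧
    K.vertexGraph.egirth = (2 * n : ℕ) ∧ K.vertexGraph.ediam = (n : ℕ)

end SComplex

/-- A complex with a type function, injective on every face, with values in the finite
set `I` of types. -/
structure TypedComplex (V I : Type*) [DecidableEq V] where
  cplx : SComplex V
  typ : V → I
  typ_injOn : ∀ s ∈ cplx.faces, Set.InjOn typ ↑s

namespace TypedComplex

variable {V I : Type*} [DecidableEq V] [DecidableEq I] [Fintype I]

/-- A geometry over `I`: a thick, residually connected flag complex, pure of rank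
`card I`, with a type function. -/
def IsGeometry (Δ : TypedComplex V I) : Prop :=
  (∅ : Finset V) ∈ Δ.cplx.faces ∧
  Δ.cplx.Pure (Fintype.card I) ∧
  Δ.cplx.Thick (Fintype.card I) ∧
  (∀ s : Finset V, (∀ v ∈ s, {v} ∈ Δ.cplx.faces) →
    (∀ u ∈ s, ∀ v ∈ s, u ≠ v → ({u, v} : Finset V) ∈ Δ.cplx.faces) →
    s ∈ Δ.cplx.faces) ∧
  ∀ s ∈ Δ.cplx.faces, s.card < Fintype.card I →
    (Δ.cplx.link s).IsChamberComplex (Fintype.card I - s.card)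

/-- A geometry of type `M`, for a Coxeter matrix `M` over `I`: the link of every
corank-2 face of cotype `{i, j}` is a generalized `M i j`-gon. -/
def IsGeomOfType (Δ : TypedComplex V I) (M : CoxeterMatrix I) : Prop :=
  Δ.IsGeometry ∧
  ∀ s ∈ Δ.cplx.faces, ∀ i j : I, i ≠ j →
    s.image Δ.typ = (Finset.univ.erase i).erase j →
    (Δ.cplx.link s).IsGenNGon (M i j)

/-- Nonstammering galleries from `c` to `e` together with their type: the list of
cotypes of the consecutive intersections. -/
inductive GalleryOfType (Δ : TypedComplex V I) :
    Finset V → Finset V → List I → Prop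
  | nil {c : Finset V} (hc : Δ.cplx.IsChamber c) : GalleryOfType Δ c c []
  | cons {c d e : Finset V} {i : I} {ω : List I}
      (hc : Δ.cplx.IsChamber c) (hd : Δ.cplx.IsChamber d) (hne : c ≠ d)
      (hcot : (c ∩ d).image Δ.typ = Finset.univ.erase i)
      (hrest : GalleryOfType Δ d e ω) : GalleryOfType Δ c e (i :: ω)

end TypedComplex

/-- The restriction of a Coxeter matrix to a subset of the index set. -/
def CoxeterMatrix.restrict {B : Type*} (M : CoxeterMatrix B) (J : Set B) :
    CoxeterMatrix J where
  M := fun i j => M i.1 j.1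
  isSymm := by
    ext i j
    exact M.symmetric j.1 i.1
  diagonal i := M.diagonal i.1
  off_diagonal i j h := M.off_diagonal i.1 j.1 fun hc => h (Subtype.ext hc)

namespace SComplex

variable {V : Type*} [DecidableEq V] (K : SComplex V)

/-- The geometric realization of a simplicial complex, as a set: convex combinations
of the vertices of a face. -/
def Space : Type _ :=
  {f : V → ℝ // ∃ s ∈ K.faces, (∀ v, 0 ≤ f v) ∧ (∀ v, f v ≠ 0 → v ∈ s) ∧ ∑ v ∈ s, f v = 1}

/-- The inclusion of the closed simplex of a face into the geometric realization. -/
def inclSimplex {s : Finset V} (hs : s ∈ K.faces)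
    (x : stdSimplex ℝ {v : V // v ∈ s}) : K.Space :=
  ⟨fun v => if h : v ∈ s then x.1 ⟨v, h⟩ else 0,
   s, hs,
   by
     intro v
     dsimp only
     split
     · exact x.2.1 _
     · exact le_rfl,
   by
     intro v hv
     by_contra h
     exact hv (dif_neg h),
   by
     rw [Finset.sum_dite_of_true fun _ h => h, ← x.2.2]⟩

/-- The *weak topology* on the geometric realization: the final topology with respect
to the inclusions of all closed simplices. -/
instance : TopologicalSpace K.Space :=
  ⨆ s : {s : Finset V // s ∈ K.faces},
    TopologicalSpace.coinduced (K.inclSimplex s.2) inferInstance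

end SComplex

/-! A chamber through `v` is `v` joined to a chamber of the link of `v`, and galleries of the
link lift to galleries through `v`; so chambers sharing a vertex are joined by a gallery.
Hence, on each closed simplex, either every point or no point has all its carrier chambers
reachable from a fixed chamber `c`. In the weak topology the set of such points is therefore
clopen, hence everything, and it contains the barycenter of every chamber. -/

namespace SComplex

variable {V : Type*} [DecidableEq V] {K : SComplex V} {n : ℕ}

section Link

variable {v : V} {s e : Finset V}

lemma isChamber_link_singleton_erase (he : K.IsChamber e) (hve : v ∈ e) :
    (K.link {v}).IsChamber (e.erase v) := by
  have hins : {v} ∪ e.erase v = e := by rw [← Finset.insert_eq, Finset.insert_erase hve]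
  refine ⟨⟨by simp [Finset.disjoint_singleton_left], by rw [hins]; exact he.1⟩, ?_⟩
  rintro t ⟨hvt, ht⟩ hsub
  have het : {v} ∪ t = e := he.2 _ ht (hins ▸ Finset.union_subset_union le_rfl hsub)
  refine Finset.Subset.antisymm (fun a ha => Finset.mem_erase.2 ⟨?_, ?_⟩) hsub
  · rintro rfl
    exact Finset.disjoint_singleton_left.1 hvt ha
  · exact het ▸ Finset.mem_union_right _ ha

lemma IsChamber.insert_of_link (hpure : K.Pure n) (hs : (K.link {v}).IsChamber s) :
    K.IsChamber (insert v s) := by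
  obtain ⟨e, he, hsube⟩ := hpure.1 _ hs.1.2
  have hve : v ∈ e := hsube (by simp)
  have hse : s ⊆ e.erase v := fun a ha => Finset.mem_erase.2
    ⟨by rintro rfl; exact Finset.disjoint_singleton_left.1 hs.1.1 ha,
      hsube (Finset.mem_union_right _ ha)⟩
  have hes : e.erase v = s := hs.2 _ (isChamber_link_singleton_erase he hve).1 hse
  rwa [← hes, Finset.insert_erase hve]

lemma Adj.insert_of_link (hpure : K.Pure n) {a b : Finset V}
    (hab : (K.link {v}).Adj (n - 1) a b) : K.Adj n (insert v a) (insert v b) := by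
  obtain ⟨ha, hb, hcard⟩ := hab
  refine ⟨ha.insert_of_link hpure, hb.insert_of_link hpure, ?_⟩
  have hva : v ∉ a ∩ b := fun h =>
    Finset.disjoint_singleton_left.1 ha.1.1 (Finset.mem_inter.1 h).1
  rw [← Finset.insert_inter_distrib, Finset.card_insert_of_notMem hva]
  omega

lemma reflTransGen_adj_of_mem_of_mem (hpure : K.Pure n)
    (hlink : (K.link {v}).GalleryConnected (n - 1)) {c d : Finset V}
    (hc : K.IsChamber c) (hd : K.IsChamber d) (hvc : v ∈ c) (hvd : v ∈ d) :
    Relation.ReflTransGen (K.Adj n) c d := by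
  have hgal := hlink _ _ (isChamber_link_singleton_erase hc hvc)
    (isChamber_link_singleton_erase hd hvd)
  have : Relation.ReflTransGen (K.Adj n) (insert v (c.erase v)) (insert v (d.erase v)) :=
    hgal.lift (insert v) fun a b hab => hab.insert_of_link hpure
  rwa [Finset.insert_erase hvc, Finset.insert_erase hvd] at this

end Link

section Realization

lemma Space.support_nonempty (x : K.Space) : (Function.support x.1).Nonempty := by
  obtain ⟨f, s, -, -, -, hsum⟩ := x
  by_contra h
  have hf : f = 0 := Function.support_eq_empty_iff.1 (Set.not_nonempty_iff_eq_empty.1 h)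
  simp [hf] at hsum

lemma support_inclSimplex_subset {s : Finset V} (hs : s ∈ K.faces)
    (x : stdSimplex ℝ {v : V // v ∈ s}) : Function.support (K.inclSimplex hs x).1 ⊆ s :=
  fun _ hw => by_contra fun hws => hw (dif_neg hws)

lemma exists_support_eq {s : Finset V} (hs : s ∈ K.faces) (hne : s.Nonempty) :
    ∃ x : K.Space, Function.support x.1 = s := by
  have hcard : (s.card : ℝ) ≠ 0 := Nat.cast_ne_zero.2 hne.card_pos.ne'
  refine ⟨⟨fun w => if w ∈ s then (s.card : ℝ)⁻¹ else 0, s, hs, fun w => ?_, fun w hw => ?_,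
    ?_⟩, ?_⟩
  · dsimp only
    split_ifs <;> positivity
  · by_contra h
    exact hw (if_neg h)
  · rw [Finset.sum_ite_mem, Finset.inter_self, Finset.sum_const, nsmul_eq_mul,
      mul_inv_cancel₀ hcard]
  · ext w
    simp [hcard]

lemma isClopen_of_preimage_inclSimplex {W : Set K.Space}
    (hW : ∀ s (hs : s ∈ K.faces), K.inclSimplex hs ⁻¹' W = Set.univ ∨
      K.inclSimplex hs ⁻¹' W = ∅) : IsClopen W := by
  have hopen : ∀ W : Set K.Space, (∀ s (hs : s ∈ K.faces),
      K.inclSimplex hs ⁻¹' W = Set.univ ∨ K.inclSimplex hs ⁻¹' W = ∅) → IsOpen W :=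
    fun W hW => isOpen_iSup_iff.2 fun s => isOpen_coinduced.2 <| by
      rcases hW s.1 s.2 with h | h <;> rw [h]
      exacts [isOpen_univ, isOpen_empty]
  refine ⟨isOpen_compl_iff.1 (hopen _ fun s hs => ?_), hopen W hW⟩
  rw [Set.preimage_compl]
  rcases hW s hs with h | h <;> simp [h]

end Realization

variable (K) in
def reachableSet (n : ℕ) (c : Finset V) : Set K.Space :=
  {x | ∀ e, K.IsChamber e → Function.support x.1 ⊆ e → Relation.ReflTransGen (K.Adj n) c e}

lemma isClopen_reachableSet (hpure : K.Pure n)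
    (hshare : ∀ ⦃c d v⦄, K.IsChamber c → K.IsChamber d → v ∈ c → v ∈ d →
      Relation.ReflTransGen (K.Adj n) c d) (c : Finset V) :
    IsClopen (K.reachableSet n c) := by
  refine isClopen_of_preimage_inclSimplex fun s hs => ?_
  obtain ⟨es, hes, hses⟩ := hpure.1 s hs
  have hsupp (x) : Function.support (K.inclSimplex hs x).1 ⊆ es :=
    (support_inclSimplex_subset hs x).trans (Finset.coe_subset.2 hses)
  by_cases hc : Relation.ReflTransGen (K.Adj n) c es
  · refine Or.inl (Set.eq_univ_of_forall fun x e he hxe => ?_)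
    obtain ⟨w, hw⟩ := Space.support_nonempty (K.inclSimplex hs x)
    exact hc.trans (hshare hes he (hsupp x hw) (hxe hw))
  · exact Or.inr (Set.eq_empty_of_forall_notMem fun x hx => hc (hx es hes (hsupp x)))

theorem galleryConnected_of_connectedSpace [ConnectedSpace K.Space] (hpure : K.Pure n)
    (hshare : ∀ ⦃c d v⦄, K.IsChamber c → K.IsChamber d → v ∈ c → v ∈ d →
      Relation.ReflTransGen (K.Adj n) c d) :
    K.GalleryConnected n := by
  intro c d hc hd
  obtain rfl | hcne := c.eq_empty_or_nonempty
  · rw [Finset.card_eq_zero.1 ((hpure.2 d hd).trans (hpure.2 _ hc).symm)]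
  have hdne : d.Nonempty := Finset.card_pos.1 (hpure.2 d hd ▸ hpure.2 c hc ▸ hcne.card_pos)
  obtain ⟨xc, hxc⟩ := exists_support_eq hc.1 hcne
  obtain ⟨xd, hxd⟩ := exists_support_eq hd.1 hdne
  have hxc_mem : xc ∈ K.reachableSet n c := fun e he hce => by
    rw [hc.2 e he.1 (Finset.coe_subset.1 (hxc ▸ hce))]
  have hreach := (isClopen_reachableSet hpure hshare c).eq_univ ⟨xc, hxc_mem⟩
  exact (hreach ▸ Set.mem_univ xd : xd ∈ K.reachableSet n c) d hd hxd.le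

end SComplex

theorem statement0_general {V I : Type*} [DecidableEq V]
    (Δ : TypedComplex V I) (n : ℕ)
    (hpure : Δ.cplx.Pure n)
    (hlink : ∀ v : V, ({v} : Finset V) ∈ Δ.cplx.faces →
      (Δ.cplx.link {v}).IsChamberComplex (n - 1) ∧ (Δ.cplx.link {v}).Thick (n - 1))
    (hconn : ConnectedSpace Δ.cplx.Space) :
    Δ.cplx.GalleryConnected n :=
  SComplex.galleryConnected_of_connectedSpace hpure fun _ _ v hc hd hvc hvd =>
    SComplex.reflTransGen_adj_of_mem_of_mem hpure
      (hlink v (Δ.cplx.down_closed hc.1 (Finset.singleton_subset_iff.2 hvc))).1.2 hc hd hvc hvd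

/-- Let `Δ` be a pure chamber complex of rank `n` with a type
function, such that the link of every vertex is a thick chamber complex of rank
`n - 1`.  If the geometric realization of `Δ` (with the weak topology) is connected,
then `Δ` is gallery-connected: any two chambers can be joined by a gallery. -/
theorem statement0 {V I : Type*} [DecidableEq V] [DecidableEq I] [Fintype I]
    (Δ : TypedComplex V I) (n : ℕ) (hn : Fintype.card I = n)
    (hpure : Δ.cplx.Pure n)
    (hlink : ∀ v : V, ({v} : Finset V) ∈ Δ.cplx.faces →
      (Δ.cplx.link {v}).IsChamberComplex (n - 1) ∧ (Δ.cplx.link {v}).Thick (n - 1))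
    (hconn : ConnectedSpace Δ.cplx.Space) :
    Δ.cplx.GalleryConnected n :=
  statement0_general Δ n hpure hlink hconn
end

section
/- Define σ: S² → the space of 3×3 octonion-hermitian matrices by σ(x,y,z) = [[x², −(jl)xy, −l zx], [(jl)xy, y², j yz], [l zx, −j yz, z²]], where j, l, jl are fixed imaginary octonion units. Then σ(x,y,z) is an idempotent hermitian matrix of trace 1 for every (x,y,z) ∈ S² (hence lands in the projective Cayley plane OP² realized as rank-1 projectors), σ(−x,−y,−z) = σ(x,y,z), and the image Σ = σ(S²) is isometric to the real projective plane ℝP². -/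
/-! A minimal construction of the real Cayley (octonion) algebra `𝕆` via the
Cayley–Dickson doubling of the quaternions, together with hermitian `3 × 3`
octonion matrices. -/

/-- The octonions, as pairs of quaternions (Cayley–Dickson construction). -/
structure Oct where
  a : Quaternion ℝ
  b : Quaternion ℝ

namespace Oct

def octEquiv : Oct ≃ (Quaternion ℝ × Quaternion ℝ) :=
  ⟨fun o => (o.a, o.b), fun p => ⟨p.1, p.2⟩, fun _ => rfl, fun _ => rfl⟩

noncomputable instance : AddCommGroup Oct := octEquiv.addCommGroup

/-- Cayley–Dickson multiplication. -/
noncomputable instance : Mul Oct :=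
  ⟨fun x y => ⟨x.a * y.a - star y.b * x.b, y.b * x.a + x.b * star y.a⟩⟩

noncomputable instance : One Oct := ⟨⟨1, 0⟩⟩

/-- Octonion conjugation. -/
noncomputable instance : Star Oct := ⟨fun x => ⟨star x.a, -x.b⟩⟩

/-- The canonical embedding of the reals. -/
noncomputable def ofReal (x : ℝ) : Oct := ⟨(x : Quaternion ℝ), 0⟩

/-- The imaginary unit `j`. -/
noncomputable def jO : Oct := ⟨⟨0, 0, 1, 0⟩, 0⟩

/-- The imaginary unit `ℓ`. -/
noncomputable def lO : Oct := ⟨0, 1⟩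

/-- The real part of an octonion. -/
def re (x : Oct) : ℝ := x.a.re

end Oct

/-- Product of `3 × 3` octonion matrices. -/
noncomputable def omul3 (X Y : Matrix (Fin 3) (Fin 3) Oct) : Matrix (Fin 3) (Fin 3) Oct :=
  Matrix.of fun i j => ∑ k : Fin 3, X i k * Y k j

/-- Trace of a `3 × 3` octonion matrix. -/
noncomputable def otrace (X : Matrix (Fin 3) (Fin 3) Oct) : Oct := ∑ i : Fin 3, X i i

/-- Hermitian octonion matrices. -/
def IsOHerm (X : Matrix (Fin 3) (Fin 3) Oct) : Prop := ∀ i j, X j i = star (X i j)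

/-- The euclidean inner product `⟨X, Y⟩ = Re trace (X Y)` on octonion matrices. -/
noncomputable def oinner (X Y : Matrix (Fin 3) (Fin 3) Oct) : ℝ :=
  ∑ i : Fin 3, ∑ j : Fin 3, Oct.re (X i j * Y j i)

/-- The immersion `σ : S² → OP²` of Podestà–Thorbergsson, with values in the trace-1
hermitian `3 × 3` octonion matrices. -/
noncomputable def octSigma (x y z : ℝ) : Matrix (Fin 3) (Fin 3) Oct :=
  Matrix.of
    ![![Oct.ofReal (x ^ 2), -(Oct.jO * Oct.lO * Oct.ofReal (x * y)),
        -(Oct.lO * Oct.ofReal (z * x))],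
      ![Oct.jO * Oct.lO * Oct.ofReal (x * y), Oct.ofReal (y ^ 2),
        Oct.jO * Oct.ofReal (y * z)],
      ![Oct.lO * Oct.ofReal (z * x), -(Oct.jO * Oct.ofReal (y * z)),
        Oct.ofReal (z ^ 2)]]

/-! All entries of `σ` lie in the quaternion subalgebra of `𝕆` spanned by `1, j, ℓ, jℓ`, where
multiplication is associative. There `σ(u) = w w*` for the column `w = (x, (jℓ) y, ℓ z)`, and
`w* w' = w w'* = ⟨u, u'⟩` is real. Hence `σ(u)² = w (w* w) w* = σ(u)`, `tr σ(u) = |u|² = 1` and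
`⟨σ(u), σ(u')⟩ = tr (w (w* w') w'*) = ⟨u, u'⟩²`. The last identity also gives injectivity up to
sign: `σ(u) = σ(u')` forces `⟨u, u'⟩² = ⟨u, u⟩² = 1`, hence `u = ±u'`. -/

open Matrix Quaternion

namespace Oct

@[ext] theorem ext {x y : Oct} (ha : x.a = y.a) (hb : x.b = y.b) : x = y := by
  cases x; cases y; congr

@[simp] theorem a_add (x y : Oct) : (x + y).a = x.a + y.a := rfl
@[simp] theorem b_add (x y : Oct) : (x + y).b = x.b + y.b := rfl
@[simp] theorem a_neg (x : Oct) : (-x).a = -x.a := rfl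
@[simp] theorem b_neg (x : Oct) : (-x).b = -x.b := rfl
@[simp] theorem a_mul (x y : Oct) : (x * y).a = x.a * y.a - star y.b * x.b := rfl
@[simp] theorem b_mul (x y : Oct) : (x * y).b = y.b * x.a + x.b * star y.a := rfl
@[simp] theorem a_star (x : Oct) : (star x).a = star x.a := rfl
@[simp] theorem b_star (x : Oct) : (star x).b = -x.b := rfl
@[simp] theorem a_ofReal (t : ℝ) : (ofReal t).a = t := rfl
@[simp] theorem b_ofReal (t : ℝ) : (ofReal t).b = 0 := rfl
@[simp] theorem a_jO_re : jO.a.re = 0 := rfl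
@[simp] theorem a_jO_imI : jO.a.imI = 0 := rfl
@[simp] theorem a_jO_imJ : jO.a.imJ = 1 := rfl
@[simp] theorem a_jO_imK : jO.a.imK = 0 := rfl
@[simp] theorem b_jO : jO.b = 0 := rfl
@[simp] theorem a_lO : lO.a = 0 := rfl
@[simp] theorem b_lO : lO.b = 1 := rfl

/-- The quaternions embed in `𝕆` as the subalgebra spanned by `1, j, ℓ, jℓ`, via
`i ↦ j`, `j ↦ ℓ`, `k ↦ jℓ`. -/
def ofQuaternion : ℍ[ℝ] →+ Oct where
  toFun q := ⟨⟨q.re, 0, q.imI, 0⟩, ⟨q.imJ, 0, q.imK, 0⟩⟩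
  map_zero' := rfl
  map_add' p q := by ext <;> first | rfl | exact (add_zero (0 : ℝ)).symm

@[simp] theorem ofQuaternion_a_re (q : ℍ[ℝ]) : (ofQuaternion q).a.re = q.re := rfl
@[simp] theorem ofQuaternion_a_imI (q : ℍ[ℝ]) : (ofQuaternion q).a.imI = 0 := rfl
@[simp] theorem ofQuaternion_a_imJ (q : ℍ[ℝ]) : (ofQuaternion q).a.imJ = q.imI := rfl
@[simp] theorem ofQuaternion_a_imK (q : ℍ[ℝ]) : (ofQuaternion q).a.imK = 0 := rfl
@[simp] theorem ofQuaternion_b_re (q : ℍ[ℝ]) : (ofQuaternion q).b.re = q.imJ := rfl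
@[simp] theorem ofQuaternion_b_imI (q : ℍ[ℝ]) : (ofQuaternion q).b.imI = 0 := rfl
@[simp] theorem ofQuaternion_b_imJ (q : ℍ[ℝ]) : (ofQuaternion q).b.imJ = q.imK := rfl
@[simp] theorem ofQuaternion_b_imK (q : ℍ[ℝ]) : (ofQuaternion q).b.imK = 0 := rfl

@[simp] theorem re_ofQuaternion (q : ℍ[ℝ]) : re (ofQuaternion q) = q.re := rfl

/-- Multiplicativity holds because both components of `ofQuaternion q` lie in the commutative
subalgebra `ℝ + ℝ j` of `ℍ`, where Cayley–Dickson doubling reproduces quaternion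
multiplication. -/
theorem ofQuaternion_mul (p q : ℍ[ℝ]) :
    ofQuaternion (p * q) = ofQuaternion p * ofQuaternion q := by
  ext <;> simp [Quaternion.re_mul, Quaternion.imI_mul, Quaternion.imJ_mul, Quaternion.imK_mul] <;>
    ring

theorem ofQuaternion_star (q : ℍ[ℝ]) : ofQuaternion (star q) = star (ofQuaternion q) := by
  ext <;> simp

end Oct

theorem Quaternion.re_sum {R ι : Type*} [CommRing R] (s : Finset ι) (f : ι → ℍ[R]) :
    (∑ i ∈ s, f i).re = ∑ i ∈ s, (f i).re :=
  map_sum (QuaternionAlgebra.reₗ _ _ _) f s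

open Oct

section MapOfQuaternion

variable (A B : Matrix (Fin 3) (Fin 3) ℍ[ℝ])

theorem omul3_map_ofQuaternion :
    omul3 (A.map ofQuaternion) (B.map ofQuaternion) = (A * B).map ofQuaternion := by
  ext1 i j
  simp [omul3, mul_apply, ofQuaternion_mul]

theorem otrace_map_ofQuaternion : otrace (A.map ofQuaternion) = ofQuaternion A.trace :=
  (map_sum ofQuaternion _ _).symm

theorem Matrix.IsHermitian.isOHerm_map_ofQuaternion {A : Matrix (Fin 3) (Fin 3) ℍ[ℝ]}
    (hA : A.IsHermitian) : IsOHerm (A.map ofQuaternion) := fun i j => by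
  rw [map_apply, map_apply, ← ofQuaternion_star, hA.apply]

theorem oinner_map_ofQuaternion :
    oinner (A.map ofQuaternion) (B.map ofQuaternion) = (A * B).trace.re := by
  simp only [oinner, trace, diag, mul_apply, map_apply, ← ofQuaternion_mul, re_ofQuaternion,
    Quaternion.re_sum]

end MapOfQuaternion

section QuatSigma

variable (x y z x' y' z' : ℝ)

def sigmaVec : Fin 3 → ℍ[ℝ] := ![x, ⟨0, 0, 0, y⟩, ⟨0, 0, z, 0⟩]

@[simp] theorem sigmaVec_re (i : Fin 3) : (sigmaVec x y z i).re = ![x, 0, 0] i := by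
  fin_cases i <;> rfl
@[simp] theorem sigmaVec_imI (i : Fin 3) : (sigmaVec x y z i).imI = 0 := by
  fin_cases i <;> rfl
@[simp] theorem sigmaVec_imJ (i : Fin 3) : (sigmaVec x y z i).imJ = ![0, 0, z] i := by
  fin_cases i <;> rfl
@[simp] theorem sigmaVec_imK (i : Fin 3) : (sigmaVec x y z i).imK = ![0, y, 0] i := by
  fin_cases i <;> rfl

noncomputable def quatSigma : Matrix (Fin 3) (Fin 3) ℍ[ℝ] :=
  vecMulVec (sigmaVec x y z) (star (sigmaVec x y z))

theorem star_sigmaVec_dotProduct :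
    star (sigmaVec x y z) ⬝ᵥ sigmaVec x' y' z' = ((x * x' + y * y' + z * z' : ℝ) : ℍ[ℝ]) := by
  ext <;> simp [dotProduct, Fin.sum_univ_three]

theorem sigmaVec_dotProduct_star :
    sigmaVec x y z ⬝ᵥ star (sigmaVec x' y' z') = ((x * x' + y * y' + z * z' : ℝ) : ℍ[ℝ]) := by
  ext <;> simp [dotProduct, Fin.sum_univ_three]

theorem octSigma_eq_map_quatSigma : octSigma x y z = (quatSigma x y z).map ofQuaternion := by
  ext1 i j
  fin_cases i <;> fin_cases j <;> ext <;>
    simp [octSigma, quatSigma, vecMulVec_apply, -Quaternion.coe_pow, Quaternion.re_mul,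
      Quaternion.imI_mul, Quaternion.imJ_mul, Quaternion.imK_mul] <;> ring

theorem quatSigma_isHermitian : (quatSigma x y z).IsHermitian := by
  rw [quatSigma, IsHermitian, conjTranspose_vecMulVec, star_star]

theorem quatSigma_mul_quatSigma : quatSigma x y z * quatSigma x' y' z' =
    (x * x' + y * y' + z * z') • vecMulVec (sigmaVec x y z) (star (sigmaVec x' y' z')) := by
  rw [quatSigma, quatSigma, vecMulVec_mul_vecMulVec, star_sigmaVec_dotProduct,
    ← Quaternion.algebraMap_def, algebraMap_smul, vecMulVec_smul]

theorem trace_quatSigma_mul_quatSigma :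
    (quatSigma x y z * quatSigma x' y' z').trace = ((x * x' + y * y' + z * z') ^ 2 : ℝ) := by
  rw [quatSigma_mul_quatSigma, trace_smul, trace_vecMulVec, sigmaVec_dotProduct_star,
    ← Quaternion.coe_smul, smul_eq_mul, sq]

variable {x y z}

theorem quatSigma_mul_self (h : x ^ 2 + y ^ 2 + z ^ 2 = 1) :
    quatSigma x y z * quatSigma x y z = quatSigma x y z := by
  rw [quatSigma_mul_quatSigma, ← sq, ← sq, ← sq, h, one_smul, quatSigma]

theorem trace_quatSigma (h : x ^ 2 + y ^ 2 + z ^ 2 = 1) : (quatSigma x y z).trace = 1 := by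
  rw [quatSigma, trace_vecMulVec, sigmaVec_dotProduct_star, ← sq, ← sq, ← sq, h,
    Quaternion.coe_one]

end QuatSigma

section OctSigma

variable (x y z x' y' z' : ℝ)

theorem isOHerm_octSigma : IsOHerm (octSigma x y z) := by
  rw [octSigma_eq_map_quatSigma]
  exact (quatSigma_isHermitian x y z).isOHerm_map_ofQuaternion

theorem oinner_octSigma :
    oinner (octSigma x y z) (octSigma x' y' z') = (x * x' + y * y' + z * z') ^ 2 := by
  rw [octSigma_eq_map_quatSigma, octSigma_eq_map_quatSigma, oinner_map_ofQuaternion,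
    trace_quatSigma_mul_quatSigma, Quaternion.re_coe]

theorem octSigma_neg : octSigma (-x) (-y) (-z) = octSigma x y z := by
  simp [octSigma]

variable {x y z x' y' z'}

theorem omul3_octSigma_self (h : x ^ 2 + y ^ 2 + z ^ 2 = 1) :
    omul3 (octSigma x y z) (octSigma x y z) = octSigma x y z := by
  rw [octSigma_eq_map_quatSigma, omul3_map_ofQuaternion, quatSigma_mul_self h]

theorem otrace_octSigma (h : x ^ 2 + y ^ 2 + z ^ 2 = 1) : otrace (octSigma x y z) = 1 := by
  rw [octSigma_eq_map_quatSigma, otrace_map_ofQuaternion, trace_quatSigma h]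
  rfl

theorem eq_or_eq_neg_of_dot_sq_eq_one (h : x ^ 2 + y ^ 2 + z ^ 2 = 1)
    (h' : x' ^ 2 + y' ^ 2 + z' ^ 2 = 1) (hdot : (x * x' + y * y' + z * z') ^ 2 = 1) :
    (x, y, z) = (x', y', z') ∨ (x, y, z) = (-x', -y', -z') := by
  simp only [Prod.mk.injEq]
  have hfac : (x * x' + y * y' + z * z' - 1) * (x * x' + y * y' + z * z' + 1) = 0 := by
    linear_combination hdot
  rcases mul_eq_zero.1 hfac with hdot | hdot
  · have hdist : (x - x') ^ 2 + (y - y') ^ 2 + (z - z') ^ 2 = 0 := by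
      linear_combination h + h' - 2 * hdot
    left
    refine ⟨?_, ?_, ?_⟩ <;> nlinarith [sq_nonneg (x - x'), sq_nonneg (y - y'), sq_nonneg (z - z')]
  · have hdist : (x + x') ^ 2 + (y + y') ^ 2 + (z + z') ^ 2 = 0 := by
      linear_combination h + h' + 2 * hdot
    right
    refine ⟨?_, ?_, ?_⟩ <;> nlinarith [sq_nonneg (x + x'), sq_nonneg (y + y'), sq_nonneg (z + z')]

theorem octSigma_eq_octSigma_iff (h : x ^ 2 + y ^ 2 + z ^ 2 = 1)
    (h' : x' ^ 2 + y' ^ 2 + z' ^ 2 = 1) :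
    octSigma x y z = octSigma x' y' z' ↔
      (x, y, z) = (x', y', z') ∨ (x, y, z) = (-x', -y', -z') := by
  constructor
  · intro heq
    refine eq_or_eq_neg_of_dot_sq_eq_one h h' ?_
    calc (x * x' + y * y' + z * z') ^ 2 = oinner (octSigma x y z) (octSigma x' y' z') :=
          (oinner_octSigma ..).symm
      _ = oinner (octSigma x y z) (octSigma x y z) := by rw [heq]
      _ = 1 := by rw [oinner_octSigma, ← sq, ← sq, ← sq, h, one_pow]
  · rintro (heq | heq) <;> simp only [Prod.mk.injEq] at heq <;> obtain ⟨rfl, rfl, rfl⟩ := heq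
    · rfl
    · exact octSigma_neg x' y' z'

end OctSigma

/-- For `(x, y, z) ∈ S²` the matrix `σ(x, y, z)` is an idempotent
hermitian octonion matrix of trace 1 — hence lies in the Cayley plane `OP²` realized as
rank-1 projectors — with `σ(-v) = σ(v)`; moreover `σ` is injective up to antipodes and
satisfies `⟨σ(u), σ(v)⟩ = ⟨u, v⟩²`, so that the image `Σ = σ(S²)` (with the induced
metric) is isometric to the real projective plane `ℝP²`. -/
theorem statement18 (x y z : ℝ) (h : x ^ 2 + y ^ 2 + z ^ 2 = 1) :
    IsOHerm (octSigma x y z) ∧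
    omul3 (octSigma x y z) (octSigma x y z) = octSigma x y z ∧
    otrace (octSigma x y z) = 1 ∧
    octSigma (-x) (-y) (-z) = octSigma x y z ∧
    (∀ x' y' z' : ℝ, x' ^ 2 + y' ^ 2 + z' ^ 2 = 1 →
      (octSigma x y z = octSigma x' y' z' ↔
        ((x, y, z) = (x', y', z') ∨ (x, y, z) = (-x', -y', -z')))) ∧
    (∀ x' y' z' : ℝ, x' ^ 2 + y' ^ 2 + z' ^ 2 = 1 →
      oinner (octSigma x y z) (octSigma x' y' z') = (x * x' + y * y' + z * z') ^ 2) :=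
  ⟨isOHerm_octSigma x y z, omul3_octSigma_self h, otrace_octSigma h, octSigma_neg x y z,
    fun _ _ _ h' => octSigma_eq_octSigma_iff h h', fun x' y' z' _ => oinner_octSigma x y z x' y' z'⟩
end
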